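/- Let f(x,y) = ∏_{i=1}^n (x² + y² − m_i²) with 0 < m_1 < ⋯ < m_n. Then there exists R > 0 such that for all (x,y) with x² + y² > R², Hess f(x,y) > 0; in particular, for x² + y² > m_n² all points (x, y, f(x,y)) on the graph of f are elliptic (Hess f > 0 outside the largest circle). -/

import Mathlib

/-!
Writing ρ = x² + y² and P = ∏ (X - m_i²), the function is radial, f(x, y) = P(ρ), and a direct
computation gives Hess f = 4 P'(ρ) (P'(ρ) + 2ρ P''(ρ)). Outside the largest circle ρ exceeds every
root m_i² of P, so by the Leibniz rule every derivative of P is nonnegative at ρ, and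
P'(ρ) = ∑_j ∏_{i ≠ j} (ρ - m_i²) is strictly positive.
-/

noncomputable def Hess (f : ℝ → ℝ → ℝ) (x y : ℝ) : ℝ :=
  deriv (fun t => deriv (fun s => f s y) t) x *
    deriv (fun t => deriv (fun s => f x s) t) y -
    (deriv (fun t => deriv (fun s => f s t) x) y) ^ 2

open Polynomial Finset

section Radial

variable {g g' g'' : ℝ → ℝ}

theorem hasDerivAt_comp_sq_add (hg : ∀ t, HasDerivAt g (g' t) t) (a x : ℝ) :
    HasDerivAt (fun s => g (s ^ 2 + a)) (g' (x ^ 2 + a) * (2 * x)) x :=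
  (hg _).comp x (by simpa using (hasDerivAt_pow 2 x).add_const a)

theorem hasDerivAt_comp_add_sq (hg : ∀ t, HasDerivAt g (g' t) t) (a x : ℝ) :
    HasDerivAt (fun s => g (a + s ^ 2)) (g' (a + x ^ 2) * (2 * x)) x := by
  simpa only [add_comm a] using hasDerivAt_comp_sq_add hg a x

theorem hess_comp_sq_add_sq (hg : ∀ t, HasDerivAt g (g' t) t)
    (hg' : ∀ t, HasDerivAt g' (g'' t) t) (x y : ℝ) :
    Hess (fun x y => g (x ^ 2 + y ^ 2)) x y =
      4 * g' (x ^ 2 + y ^ 2) *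
        (g' (x ^ 2 + y ^ 2) + 2 * (x ^ 2 + y ^ 2) * g'' (x ^ 2 + y ^ 2)) := by
  have h2 (z : ℝ) : HasDerivAt (fun t : ℝ => 2 * t) 2 z := by
    simpa using (hasDerivAt_id z).const_mul (2 : ℝ)
  have fx (b t : ℝ) : deriv (fun s => g (s ^ 2 + b ^ 2)) t = g' (t ^ 2 + b ^ 2) * (2 * t) :=
    (hasDerivAt_comp_sq_add hg _ t).deriv
  have fy (t : ℝ) : deriv (fun s => g (x ^ 2 + s ^ 2)) t = g' (x ^ 2 + t ^ 2) * (2 * t) :=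
    (hasDerivAt_comp_add_sq hg _ t).deriv
  have fxx : HasDerivAt (fun t => g' (t ^ 2 + y ^ 2) * (2 * t)) _ x :=
    (hasDerivAt_comp_sq_add hg' (y ^ 2) x).mul (h2 x)
  have fyy : HasDerivAt (fun t => g' (x ^ 2 + t ^ 2) * (2 * t)) _ y :=
    (hasDerivAt_comp_add_sq hg' (x ^ 2) y).mul (h2 y)
  have fxy := (hasDerivAt_comp_add_sq hg' (x ^ 2) y).mul_const (2 * x)
  simp only [Hess, fx, fy]
  rw [fxx.deriv, fyy.deriv, fxy.deriv]
  ring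

end Radial

theorem eval_iterate_derivative_mul_nonneg {R : Type*} [CommRing R] [PartialOrder R]
    [IsOrderedRing R] {p q : R[X]} {r : R}
    (hp : ∀ k, 0 ≤ (derivative^[k] p).eval r) (hq : ∀ k, 0 ≤ (derivative^[k] q).eval r) (k : ℕ) :
    0 ≤ (derivative^[k] (p * q)).eval r := by
  rw [iterate_derivative_mul, eval_finsetSum]
  refine sum_nonneg fun i _ => ?_
  rw [eval_smul, eval_mul]
  exact nsmul_nonneg (mul_nonneg (hp _) (hq _)) _

theorem eval_iterate_derivative_prod_X_sub_C_nonneg {R ι : Type*} [CommRing R] [PartialOrder R]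
    [IsOrderedRing R] {s : Finset ι} {c : ι → R} {r : R} (hc : ∀ i ∈ s, c i ≤ r) (k : ℕ) :
    0 ≤ (derivative^[k] (∏ i ∈ s, (X - C (c i)))).eval r := by
  revert k
  refine prod_induction _ (fun p => ∀ k, 0 ≤ (derivative^[k] p).eval r)
    (fun _ _ => eval_iterate_derivative_mul_nonneg) (fun k => ?_) (fun i hi k => ?_)
  · cases k <;> simp
  · rw [← pow_one (X - C (c i)), iterate_derivative_X_sub_pow, eval_smul, eval_pow, eval_sub,
      eval_X, eval_C]
    exact nsmul_nonneg (pow_nonneg (sub_nonneg.2 (hc i hi)) _) _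

theorem eval_derivative_prod_X_sub_C_pos {R ι : Type*} [CommRing R] [PartialOrder R]
    [IsStrictOrderedRing R] [DecidableEq ι] {s : Finset ι} (hs : s.Nonempty) {c : ι → R} {r : R}
    (hc : ∀ i ∈ s, c i < r) :
    0 < (derivative (∏ i ∈ s, (X - C (c i)))).eval r := by
  rw [derivative_prod_finset, eval_finsetSum]
  refine sum_pos (fun i _ => ?_) hs
  simp only [derivative_X_sub_C, mul_one, eval_prod, eval_sub, eval_X, eval_C]
  exact prod_pos fun j hj => sub_pos.2 (hc j (mem_of_mem_erase hj))

theorem hessian_positive_outside_largest_circle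
    (n : ℕ) (hn : 0 < n) (m : Fin n → ℝ) (hpos : ∀ i, 0 < m i)
    (hmono : StrictMono m)
    (f : ℝ → ℝ → ℝ)
    (hf : ∀ x y, f x y = ∏ i : Fin n, (x ^ 2 + y ^ 2 - m i ^ 2)) :
    (∃ R > (0 : ℝ), ∀ x y : ℝ, x ^ 2 + y ^ 2 > R ^ 2 → 0 < Hess f x y) ∧
    (∀ x y : ℝ, x ^ 2 + y ^ 2 > (m ⟨n - 1, Nat.sub_lt hn one_pos⟩) ^ 2 →
      0 < Hess f x y) := by
  set P : ℝ[X] := ∏ i : Fin n, (X - C (m i ^ 2))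
  have hfP : f = fun x y => P.eval (x ^ 2 + y ^ 2) := by
    funext x y
    simp [hf, P, eval_prod]
  have outside (x y : ℝ) (hxy : x ^ 2 + y ^ 2 > (m ⟨n - 1, Nat.sub_lt hn one_pos⟩) ^ 2) :
      0 < Hess f x y := by
    have hlt (i : Fin n) : m i ^ 2 < x ^ 2 + y ^ 2 :=
      (pow_le_pow_left₀ (hpos i).le (hmono.monotone (Fin.mk_le_mk.2 (by omega))) 2).trans_lt hxy
    have hP' : 0 < (derivative P).eval (x ^ 2 + y ^ 2) :=
      eval_derivative_prod_X_sub_C_pos (univ_nonempty_iff.2 ⟨⟨0, hn⟩⟩) fun i _ => hlt i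
    have hP'' : 0 ≤ (derivative (derivative P)).eval (x ^ 2 + y ^ 2) :=
      eval_iterate_derivative_prod_X_sub_C_nonneg (fun i _ => (hlt i).le) 2
    have hρ : 0 ≤ x ^ 2 + y ^ 2 := by positivity
    rw [hfP, hess_comp_sq_add_sq (fun t => P.hasDerivAt t) (fun t => (derivative P).hasDerivAt t)]
    exact mul_pos (mul_pos four_pos hP')
      (add_pos_of_pos_of_nonneg hP' (mul_nonneg (mul_nonneg zero_le_two hρ) hP''))
  exact ⟨⟨_, hpos _, outside⟩, outside⟩
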